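/- Let ν ∈ M_O and suppose there exist a nonzero μ ∈ M_O and a Borel set E ⊆ O bounded away from C with 0 < ν(tE) < ∞ for all sufficiently large t, such that ν(tE)^{-1} ν(t·) → μ in M_O as t → ∞. Then there exists α ≥ 0 such that μ(λA) = λ^{-α} μ(A) for every Borel set A ⊆ O and every λ > 0. -/

import Mathlib

open MeasureTheory Metric Filter Topology Set

noncomputable section

variable {S : Type*} [MetricSpace S] [MeasurableSpace S]

/-- `A` is bounded away from `C`: `A ⊆ S \ C^r` for some `r > 0`. -/
def BddAway (C A : Set S) : Prop := ∃ r > 0, ∀ x ∈ A, r ≤ infDist x C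

/-- The class `C_O` of test functions: bounded, nonnegative, continuous on `O = S \ C`,
and vanishing on `C^r` for some `r > 0` (extended by `0` to all of `S`). -/
def IsCO (C : Set S) (f : S → ℝ) : Prop :=
  ContinuousOn f Cᶜ ∧ (∀ x, 0 ≤ f x) ∧ (∃ B : ℝ, ∀ x, f x ≤ B) ∧
    ∃ r > 0, ∀ x, infDist x C < r → f x = 0

/-- The class `M_O`: Borel measures on `O = S \ C` (i.e. giving no mass to `C`)
that are finite on `S \ C^r` for each `r > 0`. -/
def MemMO (C : Set S) (μ : Measure S) : Prop :=
  μ C = 0 ∧ ∀ r : ℝ, 0 < r → μ {x | r ≤ infDist x C} < ⊤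

/-- Convergence `μ_n → μ` in `M_O`. -/
def MOTendsto (C : Set S) (μn : ℕ → Measure S) (μ : Measure S) : Prop :=
  ∀ f : S → ℝ, IsCO C f →
    Tendsto (fun n => ∫ x, f x ∂ μn n) atTop (𝓝 (∫ x, f x ∂ μ))

/-- Axioms (A1)–(A3) for a scalar multiplication `(0,∞) × S → S`, together with the
requirement that `C` be a cone. -/
def ScaleAxioms (C : Set S) (sm : ℝ → S → S) : Prop :=
  ContinuousOn (fun p : ℝ × S => sm p.1 p.2) (Set.Ioi (0:ℝ) ×ˢ Set.univ) ∧
  (∀ x, sm 1 x = x) ∧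
  (∀ l₁ l₂ : ℝ, 0 < l₁ → 0 < l₂ → ∀ x, sm l₁ (sm l₂ x) = sm (l₁ * l₂) x) ∧
  (∀ l : ℝ, 1 < l → ∀ x ∈ Cᶜ, infDist x C < infDist (sm l x) C) ∧
  (∀ x ∈ C, ∀ l : ℝ, 0 < l → sm l x ∈ C)

/-!
Write `μ_t = ν(tE)⁻¹ ν(t ·)`. For `l ≥ 1` and a test function `f`, the function `f(l⁻¹ ·)` is
again a test function, and `∫ f(l⁻¹ x) dμ_t(x) = (ν(tlE) / ν(tE)) ∫ f dμ_{tl}`. Comparing two test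
functions eliminates the unknown ratio, so in the limit `∫ f(l⁻¹ x) dμ(x) = G(l) ∫ f dμ` with
`G(l)` independent of `f`; as test functions determine measures in `M_O`, `μ(l ·) = G(l) μ`.
On `[1, ∞)` the function `G` is multiplicative, positive, and at most `1` because dilations by
`l ≥ 1` push mass away from `C`; hence `G(l) = l^(-α)` with `α ≥ 0`, and `l < 1` follows by
inverting the dilation.
-/

open scoped NNReal ENNReal BoundedContinuousFunction

section TestFunctions

variable {X : Type*} [MetricSpace X] {C : Set X} {f : X → ℝ} {r : ℝ}

lemma IsCO.continuous (hC : IsClosed C) (hf : IsCO C f) : Continuous f := by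
  obtain ⟨hcont, -, -, r, hr, hvan⟩ := hf
  refine continuous_iff_continuousAt.2 fun x => ?_
  by_cases hx : x ∈ C
  · have hnear : {y : X | infDist y C < r} ∈ 𝓝 x :=
      (isOpen_lt (continuous_infDist_pt C) continuous_const).mem_nhds
        (by simpa [infDist_zero_of_mem hx] using hr)
    exact continuousAt_const.congr (Filter.mem_of_superset hnear fun y hy => (hvan y hy).symm)
  · exact hcont.continuousAt (hC.isOpen_compl.mem_nhds hx)

lemma IsCO.mul_nnreal (hf : IsCO C f) (g : X →ᵇ ℝ≥0) : IsCO C fun x => f x * g x := by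
  obtain ⟨hcont, hf0, ⟨B, hB⟩, r, hr, hvan⟩ := hf
  refine ⟨hcont.mul (NNReal.continuous_coe.comp g.continuous).continuousOn,
    fun x => mul_nonneg (hf0 x) (g x).2, ⟨B * nndist g 0, fun x => ?_⟩, r, hr,
    fun x hx => by simp [hvan x hx]⟩
  exact mul_le_mul (hB x) (BoundedContinuousFunction.NNReal.upper_bound g x) (g x).2
    ((hf0 x).trans (hB x))

def cutoff (C : Set X) (r : ℝ) (x : X) : ℝ := min 1 (max 0 (2 * infDist x C / r - 1))

lemma cutoff_eq_one (hr : 0 < r) {x : X} (hx : r ≤ infDist x C) : cutoff C r x = 1 := by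
  have : 1 ≤ 2 * infDist x C / r - 1 := by rw [le_sub_iff_add_le, le_div_iff₀ hr]; linarith
  simp [cutoff, le_max_of_le_right this]

lemma isCO_cutoff (hr : 0 < r) : IsCO C (cutoff C r) := by
  refine ⟨Continuous.continuousOn ?_, fun x => le_min zero_le_one (le_max_left _ _),
    ⟨1, fun x => min_le_left _ _⟩, r / 2, half_pos hr, fun x hx => ?_⟩
  · unfold cutoff
    fun_prop
  · have : 2 * infDist x C / r - 1 ≤ 0 := by
      rw [sub_nonpos, div_le_one hr]; linarith
    simp [cutoff, max_eq_left this]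

lemma compl_eq_iUnion_le_infDist (hC : IsClosed C) (hCne : C.Nonempty) :
    Cᶜ = ⋃ n : ℕ, {x : X | 1 / (n + 1 : ℝ) ≤ infDist x C} := by
  ext x
  rw [mem_compl_iff, hC.notMem_iff_infDist_pos hCne, mem_iUnion]
  constructor
  · intro hx
    obtain ⟨n, hn⟩ := exists_nat_one_div_lt hx
    exact ⟨n, hn.le⟩
  · rintro ⟨n, hn⟩
    exact lt_of_lt_of_le (by positivity) hn

variable [MeasurableSpace X] [BorelSpace X]

lemma measurableSet_le_infDist (C : Set X) (r : ℝ) :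
    MeasurableSet {x : X | r ≤ infDist x C} :=
  (isClosed_le continuous_const (continuous_infDist_pt C)).measurableSet

lemma IsCO.integrable {μ : Measure X} (hC : IsClosed C) (hf : IsCO C f)
    (hμ : MemMO C μ) : Integrable f μ := by
  have hfc := hf.continuous hC
  obtain ⟨-, hf0, ⟨B, hB⟩, r, hr, hvan⟩ := hf
  refine Integrable.mono' ((integrable_indicator_iff (measurableSet_le_infDist C r)).2
    (integrableOn_const (hμ.2 r hr).ne)) hfc.aestronglyMeasurable
    (Eventually.of_forall fun x => ?_)
  rw [Real.norm_eq_abs, abs_of_nonneg (hf0 x)]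
  by_cases hx : r ≤ infDist x C
  · simpa [Set.indicator_of_mem (show x ∈ {x | r ≤ infDist x C} from hx)] using hB x
  · simp [Set.indicator_of_notMem (show x ∉ {x | r ≤ infDist x C} from hx),
      hvan x (not_le.1 hx)]

end TestFunctions

section ExtMO

variable {X : Type*} [MetricSpace X] [MeasurableSpace X] {C : Set X} {μ μ₁ μ₂ : Measure X}
  {r : ℝ}

lemma MemMO.restrict_compl (hμ : MemMO C μ) : μ.restrict Cᶜ = μ :=
  Measure.restrict_eq_self_of_ae_mem (measure_eq_zero_iff_ae_notMem.1 hμ.1)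

lemma MemMO.exists_measure_le_infDist_pos (hC : IsClosed C) (hCne : C.Nonempty)
    (hμ : MemMO C μ) (hμ0 : μ ≠ 0) : ∃ r > 0, 0 < μ {x | r ≤ infDist x C} := by
  by_contra! h
  apply hμ0
  rw [← hμ.restrict_compl, compl_eq_iUnion_le_infDist hC hCne, Measure.restrict_eq_zero,
    measure_iUnion_null_iff]
  exact fun n => nonpos_iff_eq_zero.1 (h _ (by positivity))

variable [BorelSpace X]

/-- Weighted by `cutoff C r`, the `μᵢ` become finite measures, which bounded continuous functions
determine; the weight is `1` on `{x | r ≤ infDist x C}`. -/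
lemma MemMO.restrict_le_infDist_eq (hC : IsClosed C) (h₁ : MemMO C μ₁) (h₂ : MemMO C μ₂)
    (hint : ∀ f : X → ℝ, IsCO C f → ∫ x, f x ∂μ₁ = ∫ x, f x ∂μ₂) (hr : 0 < r) :
    μ₁.restrict {x | r ≤ infDist x C} = μ₂.restrict {x | r ≤ infDist x C} := by
  have hD := measurableSet_le_infDist C r
  set ρ : X → ℝ≥0∞ := fun x => ENNReal.ofReal (cutoff C r x)
  have hρ : Measurable ρ :=
    ENNReal.measurable_ofReal.comp ((isCO_cutoff (C := C) hr).continuous hC).measurable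
  have hrestrict (μ : Measure X) :
      (μ.withDensity ρ).restrict {x | r ≤ infDist x C} = μ.restrict {x | r ≤ infDist x C} := by
    rw [restrict_withDensity hD]
    conv_rhs => rw [← withDensity_one (μ := μ.restrict _)]
    refine withDensity_congr_ae ((ae_restrict_iff' hD).2 (Eventually.of_forall fun x hx => ?_))
    simp [ρ, cutoff_eq_one hr hx]
  have hlintegral (μ : Measure X) (hμ : MemMO C μ) (g : X →ᵇ ℝ≥0) :
      ∫⁻ x, g x ∂μ.withDensity ρ = ENNReal.ofReal (∫ x, cutoff C r x * g x ∂μ) := by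
    have hg := (isCO_cutoff (C := C) hr).mul_nnreal g
    rw [lintegral_withDensity_eq_lintegral_mul μ hρ (g := fun x => (g x : ℝ≥0∞))
      (measurable_coe_nnreal_ennreal.comp g.continuous.measurable),
      ofReal_integral_eq_lintegral_ofReal (hg.integrable hC hμ) (Eventually.of_forall hg.2.1)]
    congr with x
    simp [ρ, ENNReal.ofReal_mul ((isCO_cutoff (C := C) hr).2.1 x)]
  have := isFiniteMeasure_withDensity_ofReal ((isCO_cutoff (C := C) hr).integrable hC h₁).2
  rw [← hrestrict μ₁, ← hrestrict μ₂, ext_of_forall_lintegral_eq_of_IsFiniteMeasure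
    (μ := μ₁.withDensity ρ) (ν := μ₂.withDensity ρ) fun g => by
    rw [hlintegral μ₁ h₁, hlintegral μ₂ h₂, hint _ ((isCO_cutoff (C := C) hr).mul_nnreal g)]]

lemma MemMO.ext_of_integral_eq (hC : IsClosed C) (hCne : C.Nonempty) (h₁ : MemMO C μ₁)
    (h₂ : MemMO C μ₂) (hint : ∀ f : X → ℝ, IsCO C f → ∫ x, f x ∂μ₁ = ∫ x, f x ∂μ₂) :
    μ₁ = μ₂ := by
  rw [← h₁.restrict_compl, ← h₂.restrict_compl, compl_eq_iUnion_le_infDist hC hCne]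
  exact Measure.restrict_iUnion_congr.2 fun n =>
    h₁.restrict_le_infDist_eq hC h₂ hint (by positivity)

lemma MemMO.exists_integral_ne_zero (hC : IsClosed C) (hCne : C.Nonempty) (hμ : MemMO C μ)
    (hμ0 : μ ≠ 0) : ∃ f : X → ℝ, IsCO C f ∧ ∫ x, f x ∂μ ≠ 0 := by
  by_contra! h
  exact hμ0 (hμ.ext_of_integral_eq hC hCne ⟨rfl, fun _ _ => by simp⟩ fun f hf => by simp [h f hf])

end ExtMO

section Scaling

variable {X : Type*} [MetricSpace X] {C : Set X} {sm : ℝ → X → X} {a b l : ℝ}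

namespace ScaleAxioms

lemma continuous (hsm : ScaleAxioms C sm) (hl : 0 < l) : Continuous (sm l) :=
  hsm.1.comp_continuous (Continuous.prodMk_right l) fun _ => ⟨hl, trivial⟩

lemma smul_smul (hsm : ScaleAxioms C sm) (ha : 0 < a) (hb : 0 < b) (x : X) :
    sm a (sm b x) = sm (a * b) x :=
  hsm.2.2.1 a b ha hb x

lemma smul_inv_smul (hsm : ScaleAxioms C sm) (hl : 0 < l) (x : X) : sm l (sm l⁻¹ x) = x := by
  rw [hsm.smul_smul hl (inv_pos.2 hl), mul_inv_cancel₀ hl.ne', hsm.2.1]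

lemma inv_smul_smul (hsm : ScaleAxioms C sm) (hl : 0 < l) (x : X) : sm l⁻¹ (sm l x) = x := by
  simpa using hsm.smul_inv_smul (inv_pos.2 hl) x

lemma image_eq_preimage (hsm : ScaleAxioms C sm) (hl : 0 < l) (A : Set X) :
    sm l '' A = sm l⁻¹ ⁻¹' A :=
  congrFun (Set.image_eq_preimage_of_inverse (hsm.inv_smul_smul hl) (hsm.smul_inv_smul hl)) A

lemma mem_of_smul_mem (hsm : ScaleAxioms C sm) (hl : 0 < l) {x : X} (hx : sm l x ∈ C) :
    x ∈ C := by
  simpa [hsm.inv_smul_smul hl] using hsm.2.2.2.2 _ hx l⁻¹ (inv_pos.2 hl)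

lemma infDist_le_infDist_smul (hsm : ScaleAxioms C sm) (hl : 1 ≤ l) (x : X) :
    infDist x C ≤ infDist (sm l x) C := by
  rcases hl.eq_or_lt with rfl | hl
  · rw [hsm.2.1]
  by_cases hx : x ∈ C
  · rw [infDist_zero_of_mem hx]
    exact infDist_nonneg
  · exact (hsm.2.2.2.1 l hl x hx).le

lemma nonempty [Nonempty X] (hsm : ScaleAxioms C sm) : C.Nonempty := by
  by_contra! hC
  obtain ⟨x⟩ := ‹Nonempty X›
  simpa [hC] using hsm.2.2.2.1 2 one_lt_two x (by simp [hC])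

lemma preimage_smul_inv_subset (hsm : ScaleAxioms C sm) (hl : 1 ≤ l) {r : ℝ} :
    sm l⁻¹ ⁻¹' {x | r ≤ infDist x C} ⊆ {x | r ≤ infDist x C} := fun x (hx : r ≤ _) =>
  calc r ≤ infDist (sm l⁻¹ x) C := hx
    _ ≤ infDist (sm l (sm l⁻¹ x)) C := hsm.infDist_le_infDist_smul hl _
    _ = infDist x C := by rw [hsm.smul_inv_smul (zero_lt_one.trans_le hl)]

end ScaleAxioms

lemma IsCO.comp_smul_inv {f : X → ℝ} (hC : IsClosed C) (hsm : ScaleAxioms C sm) (hf : IsCO C f)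
    (hl : 1 ≤ l) : IsCO C fun x => f (sm l⁻¹ x) := by
  have hl0 : 0 < l := zero_lt_one.trans_le hl
  have hfc := hf.continuous hC
  obtain ⟨-, hf0, ⟨B, hB⟩, r, hr, hvan⟩ := hf
  refine ⟨(hfc.comp (hsm.continuous (inv_pos.2 hl0))).continuousOn,
    fun x => hf0 _, ⟨B, fun x => hB _⟩, r, hr, fun x hx => hvan _ ?_⟩
  calc infDist (sm l⁻¹ x) C ≤ infDist (sm l (sm l⁻¹ x)) C := hsm.infDist_le_infDist_smul hl _
    _ = infDist x C := by rw [hsm.smul_inv_smul hl0]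
    _ < r := hx

variable [MeasurableSpace X] {μ : Measure X}

lemma ScaleAxioms.map_one (hsm : ScaleAxioms C sm) : μ.map (sm 1) = μ := by
  rw [show sm 1 = id from funext hsm.2.1, Measure.map_id]

lemma MemMO.smul (hμ : MemMO C μ) (c : ℝ≥0) : MemMO C ((c : ℝ≥0∞) • μ) :=
  ⟨by simp [hμ.1], fun r hr => by simpa using ENNReal.mul_lt_top ENNReal.coe_lt_top (hμ.2 r hr)⟩

variable [BorelSpace X]

lemma ScaleAxioms.measurable (hsm : ScaleAxioms C sm) (hl : 0 < l) : Measurable (sm l) :=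
  (hsm.continuous hl).measurable

lemma ScaleAxioms.map_map (hsm : ScaleAxioms C sm) (ha : 0 < a) (hb : 0 < b) :
    (μ.map (sm b)).map (sm a) = μ.map (sm (a * b)) := by
  rw [Measure.map_map (hsm.measurable ha) (hsm.measurable hb)]
  exact congrArg (Measure.map · μ) (funext (hsm.smul_smul ha hb))

lemma MemMO.map_smul_inv (hC : IsClosed C) (hsm : ScaleAxioms C sm) (hμ : MemMO C μ)
    (hl : 1 ≤ l) : MemMO C (μ.map (sm l⁻¹)) := by
  have hl0 : 0 < l := zero_lt_one.trans_le hl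
  have hm := hsm.measurable (inv_pos.2 hl0)
  refine ⟨?_, fun r hr => ?_⟩
  · rw [Measure.map_apply hm hC.measurableSet]
    exact measure_mono_null (fun x => hsm.mem_of_smul_mem (inv_pos.2 hl0)) hμ.1
  · rw [Measure.map_apply hm (measurableSet_le_infDist C r)]
    exact (measure_mono (hsm.preimage_smul_inv_subset hl)).trans_lt (hμ.2 r hr)

end Scaling

section NormalizedDilation

variable {X : Type*} [MetricSpace X] [MeasurableSpace X] [BorelSpace X] {C : Set X}
  {sm : ℝ → X → X} {ν μ : Measure X} {E : Set X} {t l : ℝ}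

/-- The measure `ν(tE)⁻¹ ν(t ·)`, where `ν(t ·) : A ↦ ν(tA)` is the image of `ν` under `t⁻¹ ·`. -/
def normalizedDilation (sm : ℝ → X → X) (ν : Measure X) (E : Set X) (t : ℝ) : Measure X :=
  (ν (sm t '' E))⁻¹ • ν.map (sm t⁻¹)

lemma map_normalizedDilation (hsm : ScaleAxioms C sm) (ht : 0 < t) (hl : 0 < l)
    (h₀ : ν (sm (t * l) '' E) ≠ 0) (h_top : ν (sm (t * l) '' E) ≠ ⊤) :
    (normalizedDilation sm ν E t).map (sm l⁻¹) =
      (ν (sm (t * l) '' E) / ν (sm t '' E)) • normalizedDilation sm ν E (t * l) := by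
  rw [normalizedDilation, normalizedDilation, Measure.map_smul,
    hsm.map_map (inv_pos.2 hl) (inv_pos.2 ht), ← mul_inv_rev, smul_smul, ENNReal.div_eq_inv_mul,
    mul_assoc, ENNReal.mul_inv_cancel h₀ h_top, mul_one]

lemma integral_comp_smul_inv_normalizedDilation (hsm : ScaleAxioms C sm) (ht : 0 < t)
    (hl : 0 < l) (h₀ : ν (sm (t * l) '' E) ≠ 0) (h_top : ν (sm (t * l) '' E) ≠ ⊤) {f : X → ℝ}
    (hf : Continuous f) :
    ∫ x, f (sm l⁻¹ x) ∂normalizedDilation sm ν E t =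
      (ν (sm (t * l) '' E) / ν (sm t '' E)).toReal *
        ∫ x, f x ∂normalizedDilation sm ν E (t * l) := by
  rw [← integral_map (hsm.measurable (inv_pos.2 hl)).aemeasurable hf.aestronglyMeasurable,
    map_normalizedDilation hsm ht hl h₀ h_top, integral_smul_measure, smul_eq_mul]

lemma integral_comp_smul_inv_mul_comm (hC : IsClosed C) (hsm : ScaleAxioms C sm)
    (hfin : ∀ᶠ t : ℝ in atTop, 0 < ν (sm t '' E) ∧ ν (sm t '' E) < ⊤)
    (hconv : ∀ f : X → ℝ, IsCO C f →
      Tendsto (fun t => ∫ x, f x ∂normalizedDilation sm ν E t) atTop (𝓝 (∫ x, f x ∂μ)))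
    {f g : X → ℝ} (hf : IsCO C f) (hg : IsCO C g) (hl : 1 ≤ l) :
    (∫ x, f (sm l⁻¹ x) ∂μ) * ∫ x, g x ∂μ = (∫ x, g (sm l⁻¹ x) ∂μ) * ∫ x, f x ∂μ := by
  have hl0 : 0 < l := zero_lt_one.trans_le hl
  have htl : Tendsto (· * l) atTop atTop := tendsto_id.atTop_mul_const hl0
  have hlim (f g : X → ℝ) (hf : IsCO C f) (hg : IsCO C g) :
      Tendsto (fun t => (∫ x, f (sm l⁻¹ x) ∂normalizedDilation sm ν E t) *
        ∫ x, g x ∂normalizedDilation sm ν E (t * l)) atTop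
        (𝓝 ((∫ x, f (sm l⁻¹ x) ∂μ) * ∫ x, g x ∂μ)) :=
    (hconv _ (hf.comp_smul_inv hC hsm hl)).mul ((hconv g hg).comp htl)
  refine tendsto_nhds_unique (hlim f g hf hg) ((hlim g f hg hf).congr' ?_)
  filter_upwards [eventually_gt_atTop 0, htl.eventually hfin] with t ht ⟨h₀, h_top⟩
  rw [integral_comp_smul_inv_normalizedDilation hsm ht hl0 h₀.ne' h_top.ne (hf.continuous hC),
    integral_comp_smul_inv_normalizedDilation hsm ht hl0 h₀.ne' h_top.ne (hg.continuous hC)]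
  ring

lemma exists_map_smul_inv_eq_smul (hC : IsClosed C) (hsm : ScaleAxioms C sm)
    (hfin : ∀ᶠ t : ℝ in atTop, 0 < ν (sm t '' E) ∧ ν (sm t '' E) < ⊤)
    (hconv : ∀ f : X → ℝ, IsCO C f →
      Tendsto (fun t => ∫ x, f x ∂normalizedDilation sm ν E t) atTop (𝓝 (∫ x, f x ∂μ)))
    (hCne : C.Nonempty) (hμ : MemMO C μ) (hμ0 : μ ≠ 0) :
    ∃ G : ℝ → ℝ≥0, ∀ l, 1 ≤ l → μ.map (sm l⁻¹) = (G l : ℝ≥0∞) • μ := by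
  obtain ⟨f₀, hf₀, hf₀μ⟩ := hμ.exists_integral_ne_zero hC hCne hμ0
  refine ⟨fun l => ((∫ x, f₀ (sm l⁻¹ x) ∂μ) / ∫ x, f₀ x ∂μ).toNNReal, fun l hl => ?_⟩
  have hG0 : 0 ≤ (∫ x, f₀ (sm l⁻¹ x) ∂μ) / ∫ x, f₀ x ∂μ :=
    div_nonneg (integral_nonneg fun x => hf₀.2.1 _) (integral_nonneg hf₀.2.1)
  refine (hμ.map_smul_inv hC hsm hl).ext_of_integral_eq hC hCne (hμ.smul _) fun f hf => ?_
  rw [integral_map (hsm.measurable (by positivity)).aemeasurable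
      (hf.continuous hC).aestronglyMeasurable, integral_smul_measure, ENNReal.coe_toReal,
    Real.coe_toNNReal _ hG0, smul_eq_mul, div_mul_eq_mul_div, eq_div_iff hf₀μ,
    integral_comp_smul_inv_mul_comm hC hsm hfin hconv hf hf₀ hl]

end NormalizedDilation

section Cauchy

lemma eq_mul_of_map_add_of_nonpos {h : ℝ → ℝ}
    (hadd : ∀ s t, 0 ≤ s → 0 ≤ t → h (s + t) = h s + h t) (hnonpos : ∀ t, 0 ≤ t → h t ≤ 0)
    {t : ℝ} (ht : 0 ≤ t) : h t = t * h 1 := by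
  have hanti : ∀ s u, 0 ≤ s → s ≤ u → h u ≤ h s := fun s u hs hsu => by
    have := hadd s (u - s) hs (sub_nonneg.2 hsu)
    rw [add_sub_cancel] at this
    linarith [hnonpos (u - s) (sub_nonneg.2 hsu)]
  have hnsmul (n : ℕ) (s : ℝ) (hs : 0 ≤ s) : h (n * s) = n * h s := by
    induction n with
    | zero => simpa using hadd 0 0 le_rfl le_rfl
    | succ n ih => rw [Nat.cast_succ, add_mul, one_mul, hadd _ _ (by positivity) hs, ih]; ring
  have hnat (n : ℕ) : h n = n * h 1 := by simpa using hnsmul n 1 zero_le_one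
  have h1 := hnonpos 1 zero_le_one
  -- squeeze `n * t` between `⌊n * t⌋` and `⌊n * t⌋ + 1`
  have hbound (n : ℕ) : (n : ℝ) * |h t - t * h 1| ≤ -h 1 := by
    set k := ⌊(n : ℝ) * t⌋₊
    have hk : (k : ℝ) ≤ n * t := Nat.floor_le (by positivity)
    have hk' : (n : ℝ) * t < k + 1 := Nat.lt_floor_add_one _
    have hlow := hanti _ _ (Nat.cast_nonneg k) hk
    have hup := hanti _ _ (by positivity) hk'.le
    rw [hnsmul n t ht, hnat] at hlow
    rw [hnsmul n t ht, show (k : ℝ) + 1 = (k + 1 : ℕ) by push_cast; ring, hnat] at hup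
    push_cast at hup
    rw [← abs_of_nonneg (Nat.cast_nonneg (α := ℝ) n), ← abs_mul, abs_le]
    constructor <;> nlinarith
  by_contra hne
  have hpos : 0 < |h t - t * h 1| := abs_pos.2 (sub_ne_zero.2 hne)
  obtain ⟨n, hn⟩ := exists_nat_gt (-h 1 / |h t - t * h 1|)
  rw [div_lt_iff₀ hpos] at hn
  linarith [hbound n]

lemma exists_rpow_of_map_mul {G : ℝ → ℝ} (hpos : ∀ l, 1 ≤ l → 0 < G l)
    (hle : ∀ l, 1 ≤ l → G l ≤ 1) (hmul : ∀ s t, 1 ≤ s → 1 ≤ t → G (s * t) = G s * G t) :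
    ∃ α : ℝ, 0 ≤ α ∧ ∀ l, 1 ≤ l → G l = l ^ (-α) := by
  set h : ℝ → ℝ := fun s => Real.log (G (Real.exp s))
  have hadd (s t : ℝ) (hs : 0 ≤ s) (ht : 0 ≤ t) : h (s + t) = h s + h t := by
    simp only [h, Real.exp_add]
    rw [hmul _ _ (Real.one_le_exp hs) (Real.one_le_exp ht),
      Real.log_mul (hpos _ (Real.one_le_exp hs)).ne' (hpos _ (Real.one_le_exp ht)).ne']
  have hnonpos (t : ℝ) (ht : 0 ≤ t) : h t ≤ 0 :=
    Real.log_nonpos (hpos _ (Real.one_le_exp ht)).le (hle _ (Real.one_le_exp ht))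
  refine ⟨-h 1, neg_nonneg.2 (hnonpos 1 zero_le_one), fun l hl => ?_⟩
  have hl0 : 0 < l := zero_lt_one.trans_le hl
  have := eq_mul_of_map_add_of_nonpos hadd hnonpos (Real.log_nonneg hl)
  simp only [h, Real.exp_log hl0] at this
  rw [neg_neg, Real.rpow_def_of_pos hl0, ← this, Real.exp_log (hpos l hl)]

end Cauchy

section Homogeneity

variable {X : Type*} [MetricSpace X] [MeasurableSpace X] [BorelSpace X] {C : Set X}
  {sm : ℝ → X → X} {μ : Measure X} {α r : ℝ}

lemma exists_rpow_of_map_smul_inv_eq_smul (hsm : ScaleAxioms C sm) {G : ℝ → ℝ≥0}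
    (hG : ∀ l, 1 ≤ l → μ.map (sm l⁻¹) = (G l : ℝ≥0∞) • μ)
    (hD₀ : μ {x | r ≤ infDist x C} ≠ 0) (hD_top : μ {x | r ≤ infDist x C} ≠ ⊤) :
    ∃ α : ℝ, 0 ≤ α ∧ ∀ l, 1 ≤ l → μ.map (sm l⁻¹) = ENNReal.ofReal (l ^ (-α)) • μ := by
  set D := {x | r ≤ infDist x C}
  have hD := measurableSet_le_infDist C r
  have hGD (l : ℝ) (hl : 1 ≤ l) {A : Set X} (hA : MeasurableSet A) :
      μ (sm l⁻¹ ⁻¹' A) = G l * μ A := by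
    rw [← Measure.map_apply (hsm.measurable (inv_pos.2 (zero_lt_one.trans_le hl))) hA, hG l hl,
      Measure.smul_apply, smul_eq_mul]
  have hmul (s t : ℝ) (hs : 1 ≤ s) (ht : 1 ≤ t) : G (s * t) = G s * G t := by
    have h := hG (s * t) (one_le_mul_of_one_le_of_one_le hs ht)
    rw [mul_inv, ← hsm.map_map (inv_pos.2 (zero_lt_one.trans_le hs))
      (inv_pos.2 (zero_lt_one.trans_le ht)), hG t ht, Measure.map_smul, hG s hs, smul_smul,
      ← ENNReal.coe_mul] at h
    have hD' := congrArg (· D) h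
    simp only [Measure.smul_apply, smul_eq_mul] at hD'
    rw [mul_comm (G s)]
    exact_mod_cast ((ENNReal.mul_left_inj hD₀ hD_top).1 hD').symm
  have hle (l : ℝ) (hl : 1 ≤ l) : G l ≤ 1 := by
    have h : (G l : ℝ≥0∞) * μ D ≤ 1 * μ D := by
      rw [← hGD l hl hD, one_mul]
      exact measure_mono (hsm.preimage_smul_inv_subset hl)
    exact_mod_cast (ENNReal.mul_le_mul_iff_left hD₀ hD_top).1 h
  have hpos (l : ℝ) (hl : 1 ≤ l) : 0 < G l := by
    have hl0 : 0 < l := zero_lt_one.trans_le hl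
    have h := hGD l hl (hsm.measurable hl0 hD)
    rw [← Set.preimage_comp, show sm l ∘ sm l⁻¹ = id from funext (hsm.smul_inv_smul hl0),
      Set.preimage_id] at h
    refine pos_iff_ne_zero.2 fun h0 => hD₀ ?_
    simpa [h0] using h
  obtain ⟨α, hα, hGα⟩ := exists_rpow_of_map_mul (G := fun l => (G l : ℝ))
    (fun l hl => NNReal.coe_pos.2 (hpos l hl)) (fun l hl => NNReal.coe_le_one.2 (hle l hl))
    (fun s t hs ht => by simp only [hmul s t hs ht, NNReal.coe_mul])
  refine ⟨α, hα, fun l hl => ?_⟩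
  rw [hG l hl, ← hGα l hl, ENNReal.ofReal_coe_nnreal]

lemma map_smul_inv_eq_rpow_smul (hsm : ScaleAxioms C sm)
    (hα : ∀ l, 1 ≤ l → μ.map (sm l⁻¹) = ENNReal.ofReal (l ^ (-α)) • μ) {l : ℝ} (hl : 0 < l) :
    μ.map (sm l⁻¹) = ENNReal.ofReal (l ^ (-α)) • μ := by
  rcases le_or_gt 1 l with hl1 | hl1
  · exact hα l hl1
  have h := congrArg (Measure.map (sm l⁻¹)) (hα l⁻¹ ((one_le_inv₀ hl).2 hl1.le))
  rw [inv_inv, hsm.map_map (inv_pos.2 hl) hl, inv_mul_cancel₀ hl.ne', hsm.map_one,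
    Measure.map_smul, Real.inv_rpow hl.le, Real.rpow_neg hl.le, inv_inv] at h
  conv_rhs => rw [h]
  rw [smul_smul, ← ENNReal.ofReal_mul (Real.rpow_nonneg hl.le _), ← Real.rpow_add hl,
    neg_add_cancel, Real.rpow_zero, ENNReal.ofReal_one, one_smul]

end Homogeneity

theorem stmt9_general [BorelSpace S]
    (C : Set S) (hC : IsClosed C) (sm : ℝ → S → S) (hsm : ScaleAxioms C sm)
    (ν μ : Measure S) (hμ : MemMO C μ) (hμ0 : μ ≠ 0)
    (E : Set S)
    (hfin : ∀ᶠ t : ℝ in atTop, 0 < ν (sm t '' E) ∧ ν (sm t '' E) < ⊤)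
    (hconv : ∀ f : S → ℝ, IsCO C f →
      Tendsto
        (fun t : ℝ => ∫ x, f x ∂ ((ν (sm t '' E))⁻¹ • Measure.map (sm t⁻¹) ν))
        atTop (𝓝 (∫ x, f x ∂ μ))) :
    ∃ α : ℝ, 0 ≤ α ∧ ∀ A : Set S, MeasurableSet A → A ⊆ Cᶜ → ∀ l : ℝ, 0 < l →
      μ (sm l '' A) = ENNReal.ofReal (l ^ (-α)) * μ A := by
  have : Nonempty S := not_isEmpty_iff.1 fun _ => hμ0 μ.eq_zero_of_isEmpty
  have hCne := hsm.nonempty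
  obtain ⟨r, hr, hD₀⟩ := hμ.exists_measure_le_infDist_pos hC hCne hμ0
  obtain ⟨G, hG⟩ := exists_map_smul_inv_eq_smul hC hsm hfin hconv hCne hμ hμ0
  obtain ⟨α, hα, hαG⟩ := exists_rpow_of_map_smul_inv_eq_smul hsm hG hD₀.ne' (hμ.2 r hr).ne
  refine ⟨α, hα, fun A hA _ l hl => ?_⟩
  rw [hsm.image_eq_preimage hl, ← Measure.map_apply (hsm.measurable (inv_pos.2 hl)) hA,
    map_smul_inv_eq_rpow_smul hsm hαG hl, Measure.smul_apply, smul_eq_mul]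

/-- Homogeneity of the limit measure: if `ν(tE)⁻¹ ν(t·) → μ` in `M_O` as `t → ∞` for
some Borel `E ⊆ O` bounded away from `C` with `0 < ν(tE) < ∞` for large `t`, and
`μ ≠ 0`, then there is `α ≥ 0` with `μ(λA) = λ^{-α} μ(A)` for all Borel `A ⊆ O`, `λ > 0`.
Here `ν(t·)` is the measure `A ↦ ν(tA)`, realized as the pushforward of `ν` under
multiplication by `t⁻¹`. -/
theorem stmt9 [BorelSpace S] [CompleteSpace S] [TopologicalSpace.SeparableSpace S]
    (C : Set S) (hC : IsClosed C) (sm : ℝ → S → S) (hsm : ScaleAxioms C sm)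
    (ν μ : Measure S) (hν : MemMO C ν) (hμ : MemMO C μ) (hμ0 : μ ≠ 0)
    (E : Set S) (hEmeas : MeasurableSet E) (hEO : E ⊆ Cᶜ) (hEb : BddAway C E)
    (hfin : ∀ᶠ t : ℝ in atTop, 0 < ν (sm t '' E) ∧ ν (sm t '' E) < ⊤)
    (hconv : ∀ f : S → ℝ, IsCO C f →
      Tendsto
        (fun t : ℝ => ∫ x, f x ∂ ((ν (sm t '' E))⁻¹ • Measure.map (sm t⁻¹) ν))
        atTop (𝓝 (∫ x, f x ∂ μ))) :
    ∃ α : ℝ, 0 ≤ α ∧ ∀ A : Set S, MeasurableSet A → A ⊆ Cᶜ → ∀ l : ℝ, 0 < l →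
      μ (sm l '' A) = ENNReal.ofReal (l ^ (-α)) * μ A :=
  stmt9_general C hC sm hsm ν μ hμ hμ0 E hfin hconv
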